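/- arXiv:1902.01606 — 2 statements merged into one kernel-verified Lean document; each statement's English description precedes it below -/
import Mathlib

section
/- Let p > 1, ε > 0 and δ ∈ [0,1). Then there exists a constant c > 0 such that for all real numbers t ≥ s ≥ 0, t^p - s^p ≤ (1+ε) t^{p-1} (t-s) + c (t-s)^{1-δ} s^{p-1+δ}. -/
open Real

theorem stmt_0 (p ε δ : ℝ) (hp : 1 < p) (hε : 0 < ε) (hδ0 : 0 ≤ δ) (hδ1 : δ < 1) :
    ∃ c : ℝ, 0 < c ∧ ∀ t s : ℝ, 0 ≤ s → s ≤ t →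
      t ^ p - s ^ p ≤ (1 + ε) * t ^ (p - 1) * (t - s) + c * (t - s) ^ (1 - δ) * s ^ (p - 1 + δ) := by
  refine ⟨p * ((1 + ε) / ε) ^ (p - 1 + δ), by positivity, ?_⟩
  intro t s hs hst
  have ht : 0 ≤ t := hs.trans hst
  rcases eq_or_lt_of_le hst with rfl | hlt
  · simp [sub_self, Real.zero_rpow (show (1:ℝ) - δ ≠ 0 by linarith)]
  have ht' : 0 < t := lt_of_le_of_lt hs hlt
  have hts' : 0 < t - s := sub_pos.2 hlt
  have ht1 : t ^ p = t ^ (p - 1) * t := by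
    rw [← Real.rpow_add_one (ne_of_gt ht') (p - 1)]; ring_nf
  by_cases hcase : (1 + ε) * s ≤ ε * t
  · -- case s small: t ≤ (1+ε)(t-s)
    have h0 : t ≤ (1 + ε) * (t - s) := by nlinarith
    have h1 : t ^ p ≤ t ^ (p - 1) * ((1 + ε) * (t - s)) := by
      rw [ht1]
      exact mul_le_mul_of_nonneg_left h0 (Real.rpow_nonneg ht _)
    have h2 : 0 ≤ s ^ p := Real.rpow_nonneg hs _
    have h3 : 0 ≤ p * ((1 + ε) / ε) ^ (p - 1 + δ) * (t - s) ^ (1 - δ) * s ^ (p - 1 + δ) := by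
      positivity
    nlinarith [h1, h2, h3]
  · -- case s comparable to t
    have hs' : 0 < s := by nlinarith
    -- Bernoulli gives the tangent-line bound
    have hb := one_add_mul_self_le_rpow_one_add
      (show (-1:ℝ) ≤ s / t - 1 by
        have : 0 ≤ s / t := by positivity
        linarith) hp.le
    have h1 : (1:ℝ) + (s / t - 1) = s / t := by ring
    rw [h1, Real.div_rpow hs ht] at hb
    have htp : 0 < t ^ p := Real.rpow_pos_of_pos ht' _
    have hb' : (1 + p * (s / t - 1)) * t ^ p ≤ s ^ p := (le_div_iff₀ htp).mp hb
    have hexp : (1 + p * (s / t - 1)) * t ^ p = t ^ p + p * t ^ (p - 1) * s - p * t ^ p := by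
      rw [ht1]; field_simp; ring
    rw [hexp] at hb'
    have key : t ^ p - s ^ p ≤ p * t ^ (p - 1) * (t - s) := by
      have : p * t ^ p = p * t ^ (p - 1) * t := by rw [ht1]; ring
      nlinarith [hb', this]
    have h2 : t - s = (t - s) ^ (1 - δ) * (t - s) ^ δ := by
      rw [← Real.rpow_add hts']
      norm_num
    have h3 : (t - s) ^ δ ≤ t ^ δ := Real.rpow_le_rpow hts'.le (by linarith) hδ0
    have h4 : t ^ (p - 1) * t ^ δ = t ^ (p - 1 + δ) := (Real.rpow_add ht' _ _).symm
    have h5 : t ≤ (1 + ε) / ε * s := by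
      rw [div_mul_eq_mul_div, le_div_iff₀ hε]
      nlinarith
    have h6 : t ^ (p - 1 + δ) ≤ ((1 + ε) / ε * s) ^ (p - 1 + δ) :=
      Real.rpow_le_rpow ht h5 (by linarith)
    have h7 : ((1 + ε) / ε * s) ^ (p - 1 + δ)
        = ((1 + ε) / ε) ^ (p - 1 + δ) * s ^ (p - 1 + δ) :=
      Real.mul_rpow (by positivity) hs
    calc t ^ p - s ^ p ≤ p * t ^ (p - 1) * (t - s) := key
      _ = p * t ^ (p - 1) * ((t - s) ^ (1 - δ) * (t - s) ^ δ) := by rw [← h2]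
      _ ≤ p * t ^ (p - 1) * ((t - s) ^ (1 - δ) * t ^ δ) := by
          gcongr
      _ = p * t ^ (p - 1 + δ) * (t - s) ^ (1 - δ) := by rw [← h4]; ring
      _ ≤ p * (((1 + ε) / ε) ^ (p - 1 + δ) * s ^ (p - 1 + δ)) * (t - s) ^ (1 - δ) := by
          rw [← h7]; gcongr
      _ = p * ((1 + ε) / ε) ^ (p - 1 + δ) * (t - s) ^ (1 - δ) * s ^ (p - 1 + δ) := by ring
      _ ≤ (1 + ε) * t ^ (p - 1) * (t - s)
          + p * ((1 + ε) / ε) ^ (p - 1 + δ) * (t - s) ^ (1 - δ) * s ^ (p - 1 + δ) := by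
          have : 0 ≤ (1 + ε) * t ^ (p - 1) * (t - s) := by positivity
          linarith
end

section
/- Let N ≥ 2 be an integer and 1 < p < p_JL, where p_JL = ∞ if N ≤ 10 and p_JL = ((N-2)² - 4N + 8√(N-1))/((N-2)(N-10)) if N ≥ 11. Then there exists ν ∈ (0,1) such that 4ν(1-ν)p > 1 and (p_S+1)/(2ν) > (N/2)(p-1), where p_S + 1 = 2N/(N-2) for N ≥ 3 and the second inequality is automatic for N = 2. -/
open Real

set_option maxHeartbeats 1600000 in
theorem stmt_19 (N : ℕ) (hN : 2 ≤ N) (p : ℝ) (hp : 1 < p)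
    (hpJL : 11 ≤ N →
      p < (((N : ℝ) - 2) ^ 2 - 4 * N + 8 * Real.sqrt ((N : ℝ) - 1))
            / (((N : ℝ) - 2) * ((N : ℝ) - 10))) :
    ∃ ν : ℝ, 0 < ν ∧ ν < 1 ∧ 4 * ν * (1 - ν) * p > 1 ∧
      (3 ≤ N → (2 * (N : ℝ) / ((N : ℝ) - 2)) / (2 * ν) > ((N : ℝ) / 2) * (p - 1)) := by
  have hN2 : (2 : ℝ) ≤ (N : ℝ) := by exact_mod_cast hN
  by_cases hq4 : ((N : ℝ) - 2) * (p - 1) < 4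
  · -- easy case : take ν = 1/2
    refine ⟨1/2, by norm_num, by norm_num, by nlinarith, ?_⟩
    intro h3
    have h3' : (3 : ℝ) ≤ (N : ℝ) := by exact_mod_cast h3
    have hn1 : (0 : ℝ) < (N : ℝ) - 2 := by linarith
    rw [gt_iff_lt, lt_div_iff₀ (by norm_num : (0:ℝ) < 2 * (1/2 : ℝ)),
      lt_div_iff₀ hn1]
    nlinarith [mul_lt_mul_of_pos_left hq4 (show (0:ℝ) < (N:ℝ)/2 by linarith)]
  · push_neg at hq4
    have hn0 : (0 : ℝ) < (N : ℝ) - 2 := by nlinarith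
    have hN3 : (3 : ℝ) ≤ (N : ℝ) := by
      have : 2 < N := by exact_mod_cast (show (2:ℝ) < (N:ℝ) by linarith)
      exact_mod_cast this
    -- key inequality
    have hkey : ((N : ℝ) - 2) ^ 2 * (p - 1) ^ 2
        - 8 * ((N : ℝ) - 2) * p * (p - 1) + 16 * p < 0 := by
      by_cases hN10 : N ≤ 10
      · have hn8 : (N : ℝ) - 2 ≤ 8 := by
          have : (N : ℝ) ≤ 10 := by exact_mod_cast hN10
          linarith
        have ht : ((N : ℝ) - 2) * (p - 1) ≤ 8 * (p - 1) := by nlinarith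
        nlinarith [mul_nonneg (by linarith : (0:ℝ) ≤ ((N:ℝ) - 2) * (p-1) - 4)
          (by linarith : (0:ℝ) ≤ 8 * (p-1) - ((N:ℝ) - 2) * (p-1)), hq4, hp]
      · push_neg at hN10
        have hN11 : (11 : ℝ) ≤ (N : ℝ) := by exact_mod_cast hN10
        have hpJL' := hpJL hN10
        obtain ⟨s, hs⟩ : ∃ s : ℝ, s = Real.sqrt ((N : ℝ) - 1) := ⟨_, rfl⟩
        rw [← hs] at hpJL'
        have hs2' := hs
        have hs2 : s ^ 2 = (N : ℝ) - 1 := by rw [hs]; exact Real.sq_sqrt (by linarith)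
        have hs0 : 0 ≤ s := hs ▸ Real.sqrt_nonneg _
        have hs3 : 3 < s := by nlinarith
        have hE : (0 : ℝ) < ((N : ℝ) - 2) * ((N : ℝ) - 10) := by nlinarith
        rw [lt_div_iff₀ hE] at hpJL'
        have h2 : ((N : ℝ) - 2) ^ 2 - 4 * N - 8 * s <
            p * (((N : ℝ) - 2) * ((N : ℝ) - 10)) := by
          have hpge : (p - 1) * (((N : ℝ) - 2) * (((N : ℝ) - 2) - 8))
              ≥ 4 * (((N : ℝ) - 2) - 8) := by
            have hn8 : (0:ℝ) ≤ ((N : ℝ) - 2) - 8 := by linarith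
            nlinarith [hq4]
          nlinarith [hs3]
        nlinarith [mul_pos (by linarith : (0:ℝ) <
            ((N : ℝ) - 2) ^ 2 - 4 * N + 8 * s - p * (((N : ℝ) - 2) * ((N : ℝ) - 10)))
          (by linarith : (0:ℝ) <
            p * (((N : ℝ) - 2) * ((N : ℝ) - 10)) - (((N : ℝ) - 2) ^ 2 - 4 * N - 8 * s)),
          hs2, hE]
    -- set up A, c, δ, ν
    have hq0 : (0 : ℝ) < ((N : ℝ) - 2) * (p - 1) := by linarith
    obtain ⟨q, hqdef⟩ : ∃ q : ℝ, q = ((N : ℝ) - 2) * (p - 1) := ⟨_, rfl⟩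
    rw [← hqdef] at hq0
    rw [← hqdef] at hq4
    obtain ⟨A, hA⟩ : ∃ A : ℝ, A = 2 / q := ⟨_, rfl⟩
    have hA0 : 0 < A := by rw [hA]; positivity
    have hA12 : A ≤ 1/2 := by
      rw [hA, div_le_div_iff₀ hq0 (by norm_num : (0:ℝ) < 2)]
      linarith
    have hp0 : (0 : ℝ) < p := by linarith
    obtain ⟨c, hc⟩ : ∃ c : ℝ, c = 4 * A * (1 - A) * p - 1 := ⟨_, rfl⟩
    have hq2 : (0 : ℝ) < q ^ 2 := by positivity
    have hc0 : 0 < c := by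
      have hcq : c * q ^ 2 = 8 * p * (q - 2) - q ^ 2 := by
        rw [hc, hA]; field_simp; ring
      have hpos : 0 < 8 * p * (q - 2) - q ^ 2 := by
        have hexp : q ^ 2 - 8 * p * (q - 2) =
            ((N : ℝ) - 2) ^ 2 * (p - 1) ^ 2
              - 8 * ((N : ℝ) - 2) * p * (p - 1) + 16 * p := by
          rw [hqdef]; ring
        linarith [hkey]
      nlinarith [hcq, hpos, hq2]
    obtain ⟨δ, hδ⟩ : ∃ δ : ℝ, δ = min (A / 2) (c / (8 * p)) := ⟨_, rfl⟩
    have hδ0 : 0 < δ := hδ ▸ lt_min (by linarith) (by positivity)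
    have hδA : δ ≤ A / 2 := hδ ▸ min_le_left _ _
    have hδc : δ ≤ c / (8 * p) := hδ ▸ min_le_right _ _
    have hδc' : 8 * p * δ ≤ c := by
      rw [le_div_iff₀ (by positivity : (0:ℝ) < 8 * p)] at hδc
      linarith
    refine ⟨A - δ, by linarith, by linarith, ?_, ?_⟩
    · -- 4 ν (1-ν) p > 1
      have hfA : 4 * A * (1 - A) * p = 1 + c := by rw [hc]; ring
      have hexp : 4 * (A - δ) * (1 - (A - δ)) * p
          = 4 * A * (1 - A) * p - 4 * p * δ * (1 - 2 * A + δ) := by ring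
      have h01 : 0 ≤ 1 - 2 * A + δ := by linarith
      have h02 : 1 - 2 * A + δ ≤ 1 := by linarith
      have hb : 4 * p * δ * (1 - 2 * A + δ) ≤ 4 * p * δ := by
        nlinarith [mul_le_mul_of_nonneg_left h02
          (by positivity : (0:ℝ) ≤ 4 * p * δ)]
      have : 4 * (A - δ) * (1 - (A - δ)) * p ≥ 1 + c - 4 * p * δ := by
        rw [hexp, hfA]; linarith
      linarith
    · intro h3
      have hν0 : 0 < A - δ := by linarith
      rw [gt_iff_lt, lt_div_iff₀ (by positivity : (0:ℝ) < 2 * (A - δ)),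
        lt_div_iff₀ hn0]
      have hνq : (A - δ) * q < 2 := by
        have hAq : A * q = 2 := by rw [hA]; field_simp
        nlinarith [hδ0, hq0]
      have hNpos : (0 : ℝ) < (N : ℝ) := by linarith
      nlinarith [mul_lt_mul_of_pos_left hνq hNpos]
end
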